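/- Let d ≥ 3, α ∈ ℝ, and let F : S^{d−1} → [0,∞] be measurable. Then for every v ∈ ℝ^{d−1}, ∫_{S^{d−1}} F(θ') (1 − J(v)·θ')^{−α} dθ' = 2^{d−1−α} ⟨v⟩^{2α} ∫_{ℝ^{d−1}} F(J(v')) ⟨v'⟩^{2α − 2(d−1)} |v − v'|^{−2α} dv' (as an identity in [0,∞]). In particular, with α = (d−1)/2 + s, the stereographic projection of the leading scattering integral ∫_{S^{d−1}} (u(θ')−u(θ)) (1−θ·θ')^{−((d−1)/2+s)} dθ' at θ = J(v) equals 2^{(d−1)/2−s} ⟨v⟩^{d−1+2s} ∫_{ℝ^{d−1}} (u_J(v') − u_J(v)) |v−v'|^{−(d−1+2s)} ⟨v'⟩^{−(d−1−2s)} dv' whenever the latter integrand is absolutely integrable. -/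

import Mathlib

/-
By the chordal identity `1 - J(v)·J(v') = 2|v - v'|² / (⟨v⟩²⟨v'⟩²)`, the kernel
`(1 - J(v)·J(v'))^{-α}` times the stereographic density `2^{d-1}⟨v'⟩^{-2(d-1)}` factors, for
`v' ≠ v`, as `2^{d-1-α}⟨v⟩^{2α}` times `⟨v'⟩^{2α-2(d-1)}|v - v'|^{-2α}`. As the diagonal `v' = v`
is Lebesgue-null for `d ≥ 2`, pulling both sphere integrals back along the measurable embedding `J`
gives the two identities; the second is the case `α = (d-1)/2 + s`.
-/

open MeasureTheory Filter
open scoped RealInnerProductSpace ENNReal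

noncomputable section

abbrev EucV (n : ℕ) : Type := EuclideanSpace ℝ (Fin n)

/-- Inverse stereographic projection `ℝ^n → S^n ⊂ ℝ^{n+1}`. -/
def jmap (n : ℕ) (v : EucV n) : EucV (n+1) :=
  (EuclideanSpace.equiv (Fin (n+1)) ℝ).symm fun i =>
    if h : (i : ℕ) < n then 2 * v ⟨i, h⟩ / (1 + ‖v‖^2) else (‖v‖^2 - 1) / (1 + ‖v‖^2)

/-- The surface measure on the unit sphere `S^n ⊂ ℝ^{n+1}`, realized as the push-forward of
the weighted Lebesgue measure `2^n ⟨v⟩^{-2n} dv` under the inverse stereographic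
projection (the paper's change of variables `dθ = 2^{d-1} ⟨v⟩^{-2(d-1)} dv`, `d = n+1`). -/
def sphereMeasure (n : ℕ) : Measure (EucV (n+1)) :=
  Measure.map (jmap n)
    (volume.withDensity fun v => ENNReal.ofReal ((2:ℝ)^n * (1 + ‖v‖^2) ^ (-(n:ℝ))))

lemma jmap_apply (n : ℕ) (v : EucV n) (i : Fin (n+1)) :
    jmap n v i =
      if h : (i : ℕ) < n then 2 * v ⟨i, h⟩ / (1 + ‖v‖^2) else (‖v‖^2 - 1) / (1 + ‖v‖^2) :=
  rfl

lemma inner_jmap (n : ℕ) (v w : EucV n) :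
    ⟪jmap n v, jmap n w⟫ =
      (4 * ⟪v, w⟫ + (‖v‖^2 - 1) * (‖w‖^2 - 1)) / ((1 + ‖v‖^2) * (1 + ‖w‖^2)) := by
  simp only [PiLp.inner_apply, RCLike.inner_apply, conj_trivial, Fin.sum_univ_castSucc, jmap_apply,
    Fin.val_castSucc, Fin.is_lt, dif_pos, Fin.val_last, lt_irrefl, dif_neg, not_false_eq_true,
    Fin.eta, add_div, Finset.mul_sum, Finset.sum_div]
  congr 1
  · refine Finset.sum_congr rfl fun i _ => ?_
    field_simp
    ring
  · field_simp

lemma one_sub_inner_jmap (n : ℕ) (v w : EucV n) :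
    1 - ⟪jmap n v, jmap n w⟫ = 2 * ‖v - w‖^2 / ((1 + ‖v‖^2) * (1 + ‖w‖^2)) := by
  rw [inner_jmap, norm_sub_sq_real]
  field_simp
  ring

lemma jmap_injective (n : ℕ) : Function.Injective (jmap n) := by
  intro v w h
  have hchord : 2 * ‖v - w‖^2 / ((1 + ‖v‖^2) * (1 + ‖w‖^2)) = 0 := by
    rw [← one_sub_inner_jmap, h, one_sub_inner_jmap, sub_self, norm_zero]
    ring
  have hA : 1 + ‖v‖^2 ≠ 0 := by positivity
  have hB : 1 + ‖w‖^2 ≠ 0 := by positivity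
  simpa [hA, hB, sub_eq_zero] using hchord

lemma chordal_rpow_mul_density (n : ℕ) (α : ℝ) {A B r : ℝ} (hA : 0 < A) (hB : 0 < B)
    (hr : 0 < r) :
    (2 * r^2 / (A * B)) ^ (-α) * ((2:ℝ)^n * B ^ (-(n:ℝ)))
      = 2 ^ ((n:ℝ) - α) * √A ^ (2*α) * (√B ^ (2*α - 2*(n:ℝ)) * r ^ (-(2*α))) := by
  rw [← Real.rpow_div_two_eq_sqrt _ hA.le, ← Real.rpow_div_two_eq_sqrt _ hB.le,
    Real.div_rpow (by positivity) (by positivity), Real.mul_rpow (by norm_num) (by positivity),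
    Real.mul_rpow hA.le hB.le,
    ← Real.rpow_natCast 2 n, ← Real.rpow_natCast r 2, ← Real.rpow_mul hr.le,
    Real.rpow_neg hA.le, Real.rpow_neg hB.le, Real.rpow_sub two_pos, Real.rpow_neg two_pos.le]
  rw [show (2 * α - 2 * n) / 2 = α + -n by ring, Real.rpow_add hB]
  field_simp
  ring_nf

lemma measurable_jmap (n : ℕ) : Measurable (jmap n) := by
  refine (EuclideanSpace.equiv (Fin (n+1)) ℝ).symm.continuous.measurable.comp
    (measurable_pi_lambda _ fun i => ?_)
  split_ifs <;> fun_prop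

lemma measurableEmbedding_jmap (n : ℕ) : MeasurableEmbedding (jmap n) :=
  (measurable_jmap n).measurableEmbedding (jmap_injective n)

lemma one_sub_inner_jmap_rpow_mul_density (n : ℕ) (α : ℝ) {v v' : EucV n} (h : v ≠ v') :
    (1 - ⟪jmap n v, jmap n v'⟫) ^ (-α) * ((2:ℝ)^n * (1 + ‖v'‖^2) ^ (-(n:ℝ)))
      = 2 ^ ((n:ℝ) - α) * √(1 + ‖v‖^2) ^ (2*α)
        * (√(1 + ‖v'‖^2) ^ (2*α - 2*(n:ℝ)) * ‖v - v'‖ ^ (-(2*α))) := by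
  rw [one_sub_inner_jmap]
  exact chordal_rpow_mul_density n α (by positivity) (by positivity)
    (norm_pos_iff.2 (sub_ne_zero.2 h))

lemma lintegral_sphereMeasure (n : ℕ) (g : EucV (n+1) → ℝ≥0∞) :
    ∫⁻ θ, g θ ∂sphereMeasure n
      = ∫⁻ v, ENNReal.ofReal ((2:ℝ)^n * (1 + ‖v‖^2) ^ (-(n:ℝ))) * g (jmap n v) := by
  rw [sphereMeasure, (measurableEmbedding_jmap n).lintegral_map,
    lintegral_withDensity_eq_lintegral_mul_non_measurable _ (by fun_prop)
      (ae_of_all _ fun _ => ENNReal.ofReal_lt_top)]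
  rfl

lemma integral_sphereMeasure (n : ℕ) (g : EucV (n+1) → ℝ) :
    ∫ θ, g θ ∂sphereMeasure n
      = ∫ v, (2:ℝ)^n * (1 + ‖v‖^2) ^ (-(n:ℝ)) * g (jmap n v) := by
  rw [sphereMeasure, (measurableEmbedding_jmap n).integral_map,
    integral_withDensity_eq_integral_toReal_smul (by fun_prop)
      (ae_of_all _ fun _ => ENNReal.ofReal_lt_top)]
  congr 1 with v
  rw [ENNReal.toReal_ofReal (by positivity), smul_eq_mul]

theorem lintegral_sphereMeasure_mul_one_sub_inner_rpow (n : ℕ) [NeZero n] (α : ℝ)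
    (F : EucV (n+1) → ℝ≥0∞) (v : EucV n) :
    ∫⁻ θ', F θ' * ENNReal.ofReal ((1 - ⟪jmap n v, θ'⟫) ^ (-α)) ∂(sphereMeasure n)
      = ENNReal.ofReal ((2:ℝ) ^ ((n:ℝ) - α) * √(1 + ‖v‖^2) ^ (2*α))
        * ∫⁻ v', F (jmap n v') *
            ENNReal.ofReal (√(1 + ‖v'‖^2) ^ (2*α - 2*(n:ℝ)) * ‖v - v'‖ ^ (-(2*α))) := by
  rw [lintegral_sphereMeasure, ← lintegral_const_mul' _ _ ENNReal.ofReal_ne_top]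
  refine lintegral_congr_ae ?_
  filter_upwards [Measure.ae_ne volume v] with v' hv'
  rw [mul_left_comm, ← ENNReal.ofReal_mul (by positivity), mul_comm ((2:ℝ) ^ n * _),
    one_sub_inner_jmap_rpow_mul_density n α hv'.symm, ENNReal.ofReal_mul (by positivity)]
  ring

theorem integral_sphereMeasure_sub_mul_one_sub_inner_rpow (n : ℕ) [NeZero n] (s : ℝ)
    (u : EucV (n+1) → ℝ) (v : EucV n) :
    ∫ θ', (u θ' - u (jmap n v)) * (1 - ⟪jmap n v, θ'⟫) ^ (-((n:ℝ)/2 + s)) ∂(sphereMeasure n)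
      = 2 ^ ((n:ℝ)/2 - s) * √(1 + ‖v‖^2) ^ ((n:ℝ) + 2*s)
        * ∫ v', (u (jmap n v') - u (jmap n v)) * ‖v - v'‖ ^ (-((n:ℝ) + 2*s))
            * √(1 + ‖v'‖^2) ^ (-((n:ℝ) - 2*s)) := by
  rw [integral_sphereMeasure, ← integral_const_mul]
  refine integral_congr_ae ?_
  filter_upwards [Measure.ae_ne volume v] with v' hv'
  have hkernel := one_sub_inner_jmap_rpow_mul_density n ((n:ℝ)/2 + s) hv'.symm
  rw [show (n:ℝ) - ((n:ℝ)/2 + s) = (n:ℝ)/2 - s by ring,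
    show 2 * ((n:ℝ)/2 + s) = (n:ℝ) + 2*s by ring,
    show (n:ℝ) + 2*s - 2*(n:ℝ) = -((n:ℝ) - 2*s) by ring] at hkernel
  linear_combination (u (jmap n v') - u (jmap n v)) * hkernel

/-- Stereographic change of variables for singular sphere integrals: for all `α ∈ ℝ` and
measurable `F : S^{d-1} → [0,∞]`,
`∫ F(θ')(1-J(v)·θ')^{-α} dθ' = 2^{d-1-α} ⟨v⟩^{2α} ∫ F(J(v')) ⟨v'⟩^{2α-2(d-1)} |v-v'|^{-2α} dv'`;
in particular the projected form of the leading scattering integral with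
`α = (d-1)/2 + s`, under absolute integrability. -/
theorem stereographic_scattering_projection (n : ℕ) (hn : 2 ≤ n) :
    (∀ (α : ℝ) (F : EucV (n+1) → ℝ≥0∞), Measurable F → ∀ v : EucV n,
      ∫⁻ θ', F θ' * ENNReal.ofReal ((1 - ⟪jmap n v, θ'⟫) ^ (-α)) ∂(sphereMeasure n)
        = ENNReal.ofReal ((2:ℝ) ^ ((n:ℝ) - α) * Real.sqrt (1 + ‖v‖^2) ^ (2*α))
          * ∫⁻ v', F (jmap n v') *
              ENNReal.ofReal
                (Real.sqrt (1 + ‖v'‖^2) ^ (2*α - 2*(n:ℝ)) * ‖v - v'‖ ^ (-(2*α)))) ∧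
    (∀ (s : ℝ) (u : EucV (n+1) → ℝ) (v : EucV n),
      Integrable (fun v' : EucV n =>
          (u (jmap n v') - u (jmap n v)) * ‖v - v'‖ ^ (-((n:ℝ) + 2*s))
            * Real.sqrt (1 + ‖v'‖^2) ^ (-((n:ℝ) - 2*s))) →
      ∫ θ', (u θ' - u (jmap n v)) * (1 - ⟪jmap n v, θ'⟫) ^ (-((n:ℝ)/2 + s))
          ∂(sphereMeasure n)
        = 2 ^ ((n:ℝ)/2 - s) * Real.sqrt (1 + ‖v‖^2) ^ ((n:ℝ) + 2*s)
          * ∫ v', (u (jmap n v') - u (jmap n v)) * ‖v - v'‖ ^ (-((n:ℝ) + 2*s))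
              * Real.sqrt (1 + ‖v'‖^2) ^ (-((n:ℝ) - 2*s))) := by
  have : NeZero n := ⟨by omega⟩
  exact ⟨fun α F _ v => lintegral_sphereMeasure_mul_one_sub_inner_rpow n α F v,
    fun s u v _ => integral_sphereMeasure_sub_mul_one_sub_inner_rpow n s u v⟩

end
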